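/- Let G ⊂ Homeo_+([0,1]) be a group without linked fixed points, let {a,b} be a pair of successive fixed points (for some f ∈ G), and let g ∈ G. Then either g([a,b]) = [a,b], or g((a,b)) ∩ (a,b) = ∅. -/

import Mathlib

open Set Filter

noncomputable section

/-- `f` is an orientation-preserving C¹ diffeomorphism of `[0,1]`, modeled as a
bijection of `ℝ` that equals the identity outside `[0,1]`. -/
def DiffOnIcc (f : Equiv.Perm ℝ) : Prop :=
  (∀ x : ℝ, x ∉ Icc (0:ℝ) 1 → f x = x) ∧
  MapsTo ⇑f (Icc (0:ℝ) 1) (Icc (0:ℝ) 1) ∧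
  StrictMonoOn ⇑f (Icc (0:ℝ) 1) ∧
  ContDiffOn ℝ 1 ⇑f (Icc (0:ℝ) 1) ∧
  ContDiffOn ℝ 1 ⇑f.symm (Icc (0:ℝ) 1) ∧
  ∀ x ∈ Icc (0:ℝ) 1, 0 < derivWithin ⇑f (Icc (0:ℝ) 1) x

/-- The derivative (within `[0,1]`) of a diffeomorphism of `[0,1]`. -/
def D (f : Equiv.Perm ℝ) (x : ℝ) : ℝ := derivWithin ⇑f (Icc (0:ℝ) 1) x

/-- `f` is an orientation-preserving homeomorphism of `[0,1]`, modeled as a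
bijection of `ℝ` that equals the identity outside `[0,1]`. -/
def HomeoOnIcc (f : Equiv.Perm ℝ) : Prop :=
  (∀ x : ℝ, x ∉ Icc (0:ℝ) 1 → f x = x) ∧
  MapsTo ⇑f (Icc (0:ℝ) 1) (Icc (0:ℝ) 1) ∧
  StrictMonoOn ⇑f (Icc (0:ℝ) 1) ∧
  ContinuousOn ⇑f (Icc (0:ℝ) 1)

/-- `(a,b)` is a connected component of `[0,1] \ Fix f`: `a`, `b` are fixed and
there is no fixed point in between. -/
def IsCompFix (f : Equiv.Perm ℝ) (a b : ℝ) : Prop :=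
  a ∈ Icc (0:ℝ) 1 ∧ b ∈ Icc (0:ℝ) 1 ∧ a < b ∧ f a = a ∧ f b = b ∧
  ∀ x ∈ Ioo a b, f x ≠ x

/-- `{a,b}` is a pair of successive fixed points of the group `G`. -/
def SuccFix (G : Subgroup (Equiv.Perm ℝ)) (a b : ℝ) : Prop :=
  ∃ g ∈ G, IsCompFix g a b

/-- Two pairs of successive fixed points are linked if one of the open intervals
contains exactly one endpoint of the other pair. -/
def LinkedPairs (a b c d : ℝ) : Prop :=
  (∃! x, x ∈ ({c, d} : Set ℝ) ∩ Ioo a b) ∨ (∃! x, x ∈ ({a, b} : Set ℝ) ∩ Ioo c d)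

/-!
The conjugate `g f g⁻¹` has `{g a, g b}` as a pair of successive fixed points, and `g` maps
`[a, b]` onto `[g a, g b]`. Since the pairs `{a, b}` and `{g a, g b}` are not linked, the intervals
`(a, b)` and `(g a, g b)` are equal, disjoint, or strictly nested. In the nested case `g a - a` and
`g b - b` have opposite signs, so `g` fixes a point of `(a, b)` but not `a`; the component of
`[0,1] ∖ Fix g` containing `a` then has exactly one endpoint in `(a, b)`, a linked pair.
-/

lemma existsUnique_mem_pair_inter_of_xor {α : Type*} {s : Set α} {c d : α}
    (h : Xor (c ∈ s) (d ∈ s)) : ∃! x, x ∈ ({c, d} : Set α) ∩ s := by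
  rcases h with ⟨hc, hd⟩ | ⟨hd, hc⟩
  · refine ⟨c, ⟨.inl rfl, hc⟩, ?_⟩
    rintro y ⟨rfl | rfl, hy⟩
    exacts [rfl, absurd hy hd]
  · refine ⟨d, ⟨.inr rfl, hd⟩, ?_⟩
    rintro y ⟨rfl | rfl, hy⟩
    exacts [absurd hy hc, rfl]

lemma eq_or_disjoint_or_nested_of_not_linkedPairs {a b c d : ℝ} (hab : a < b) (hcd : c < d)
    (h : ¬ LinkedPairs a b c d) :
    (c = a ∧ d = b) ∨ Disjoint (Ioo c d) (Ioo a b) ∨ (a < c ∧ d < b) ∨ (c < a ∧ b < d) := by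
  have hcd_in : c ∈ Ioo a b ↔ d ∈ Ioo a b := by
    by_contra hx
    exact h (.inl (existsUnique_mem_pair_inter_of_xor ((xor_iff_not_iff _ _).mpr hx)))
  have hab_in : a ∈ Ioo c d ↔ b ∈ Ioo c d := by
    by_contra hx
    exact h (.inr (existsUnique_mem_pair_inter_of_xor ((xor_iff_not_iff _ _).mpr hx)))
  simp only [mem_Ioo] at hcd_in hab_in
  rw [Ioo_disjoint_Ioo]
  grind

lemma isCompact_Icc_inter_fixedPoints {f : ℝ → ℝ} {p q : ℝ} (hf : ContinuousOn f (Icc p q)) :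
    IsCompact (Icc p q ∩ {y | f y = y}) := by
  have : IsClosed (Icc p q ∩ (fun y => f y - y) ⁻¹' {0}) :=
    (hf.sub continuousOn_id).preimage_isClosed_of_isClosed isClosed_Icc isClosed_singleton
  simp only [preimage, mem_singleton_iff, sub_eq_zero] at this
  exact isCompact_Icc.of_isClosed_subset this inter_subset_left

lemma exists_fixedPoint_mem_Ioo_of_mul_neg {f : ℝ → ℝ} {a b : ℝ} (hab : a ≤ b)
    (hf : ContinuousOn f (Icc a b)) (hsign : (f a - a) * (f b - b) < 0) :
    ∃ p ∈ Ioo a b, f p = p := by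
  have hφ : ContinuousOn (fun x => f x - x) (Icc a b) := hf.sub continuousOn_id
  obtain ⟨p, hp, hφp⟩ : (0 : ℝ) ∈ (fun x => f x - x) '' Ioo a b := by
    rcases mul_neg_iff.mp hsign with ⟨ha, hb⟩ | ⟨ha, hb⟩
    · exact intermediate_value_Ioo' hab hφ ⟨hb, ha⟩
    · exact intermediate_value_Ioo hab hφ ⟨ha, hb⟩
  exact ⟨p, hp, sub_eq_zero.mp hφp⟩

lemma exists_fixedPoint_free_interval {f : ℝ → ℝ} {p q x : ℝ} (hf : ContinuousOn f (Icc p q))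
    (hp : f p = p) (hq : f q = q) (hx : x ∈ Icc p q) (hfx : f x ≠ x) :
    ∃ u v, p ≤ u ∧ u < x ∧ x < v ∧ v ≤ q ∧ f u = u ∧ f v = v ∧ ∀ y ∈ Ioo u v, f y ≠ y := by
  obtain ⟨u, ⟨⟨hpu, hux⟩, hfu⟩, hu⟩ :=
    (isCompact_Icc_inter_fixedPoints (hf.mono (Icc_subset_Icc_right hx.2))).exists_isGreatest
      ⟨p, ⟨le_rfl, hx.1⟩, hp⟩
  obtain ⟨v, ⟨⟨hxv, hvq⟩, hfv⟩, hv⟩ :=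
    (isCompact_Icc_inter_fixedPoints (hf.mono (Icc_subset_Icc_left hx.1))).exists_isLeast
      ⟨q, ⟨hx.2, le_rfl⟩, hq⟩
  refine ⟨u, v, hpu, hux.lt_of_ne ?_, hxv.lt_of_ne' ?_, hvq, hfu, hfv, ?_⟩
  · rintro rfl; exact hfx hfu
  · rintro rfl; exact hfx hfv
  · rintro y ⟨huy, hyv⟩ hfy
    rcases le_total y x with hyx | hxy
    · exact (hu ⟨⟨hpu.trans huy.le, hyx⟩, hfy⟩).not_gt huy
    · exact (hv ⟨⟨hxy, hyv.le.trans hvq⟩, hfy⟩).not_gt hyv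

namespace HomeoOnIcc

variable {g : Equiv.Perm ℝ}

lemma mapsTo (hg : HomeoOnIcc g) : MapsTo g (Icc 0 1) (Icc 0 1) := hg.2.1

lemma strictMonoOn (hg : HomeoOnIcc g) : StrictMonoOn g (Icc 0 1) := hg.2.2.1

lemma continuousOn (hg : HomeoOnIcc g) : ContinuousOn g (Icc 0 1) := hg.2.2.2

lemma apply_zero (hg : HomeoOnIcc g) : g 0 = 0 := by
  obtain ⟨y, hy⟩ := g.surjective 0
  have hy01 : y ∈ Icc (0 : ℝ) 1 := by
    by_contra h
    rw [hg.1 y h] at hy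
    subst hy
    exact h ⟨le_rfl, zero_le_one⟩
  have h0 : (0 : ℝ) ∈ Icc (0 : ℝ) 1 := ⟨le_rfl, zero_le_one⟩
  exact le_antisymm (hy ▸ hg.strictMonoOn.monotoneOn h0 hy01 hy01.1) (hg.mapsTo h0).1

lemma image_Ioo (hg : HomeoOnIcc g) {a b : ℝ} (ha : a ∈ Icc (0 : ℝ) 1)
    (hb : b ∈ Icc (0 : ℝ) 1) (hab : a ≤ b) :
    ⇑g '' Ioo a b = Ioo (g a) (g b) :=
  have hsub : Icc a b ⊆ Icc 0 1 := Icc_subset_Icc ha.1 hb.2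
  (hg.continuousOn.mono hsub).image_Ioo_of_strictMonoOn hab (hg.strictMonoOn.mono hsub)

lemma image_Icc (hg : HomeoOnIcc g) {a b : ℝ} (ha : a ∈ Icc (0 : ℝ) 1)
    (hb : b ∈ Icc (0 : ℝ) 1) (hab : a ≤ b) :
    ⇑g '' Icc a b = Icc (g a) (g b) :=
  have hsub : Icc a b ⊆ Icc 0 1 := Icc_subset_Icc ha.1 hb.2
  (hg.continuousOn.mono hsub).image_Icc_of_monotoneOn hab (hg.strictMonoOn.monotoneOn.mono hsub)

lemma isCompFix_conj (hg : HomeoOnIcc g) {f : Equiv.Perm ℝ} {a b : ℝ} (hab : IsCompFix f a b) :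
    IsCompFix (g * f * g⁻¹) (g a) (g b) := by
  obtain ⟨ha, hb, hlt, hfa, hfb, hfree⟩ := hab
  refine ⟨hg.mapsTo ha, hg.mapsTo hb, hg.strictMonoOn ha hb hlt, by simp [hfa], by simp [hfb], ?_⟩
  rw [← hg.image_Ioo ha hb hlt.le]
  rintro _ ⟨y, hy, rfl⟩ hfix
  exact hfree y hy (by simpa [Equiv.Perm.mul_apply] using hfix)

lemma exists_isCompFix_linkedPairs (hg : HomeoOnIcc g) {a b : ℝ} (ha : a ∈ Icc (0 : ℝ) 1)
    (hb : b ∈ Icc (0 : ℝ) 1) (hab : a < b) (hsign : (g a - a) * (g b - b) < 0) :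
    ∃ u v, IsCompFix g u v ∧ LinkedPairs a b u v := by
  have hsub : Icc a b ⊆ Icc 0 1 := Icc_subset_Icc ha.1 hb.2
  obtain ⟨p, hp, hgp⟩ :=
    exists_fixedPoint_mem_Ioo_of_mul_neg hab.le (hg.continuousOn.mono hsub) hsign
  have hga : g a ≠ a := fun h => by simp [h] at hsign
  obtain ⟨u, v, hu0, hua, hav, hvp, hgu, hgv, hfree⟩ :=
    exists_fixedPoint_free_interval
      (hg.continuousOn.mono (Icc_subset_Icc_right (hp.2.le.trans hb.2))) hg.apply_zero hgp
      ⟨ha.1, hp.1.le⟩ hga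
  have hv1 : v ≤ 1 := hvp.trans (hp.2.le.trans hb.2)
  refine ⟨u, v, ⟨⟨hu0, hua.le.trans ha.2⟩, ⟨hu0.trans (hua.trans hav).le, hv1⟩, hua.trans hav,
    hgu, hgv, hfree⟩, .inl (existsUnique_mem_pair_inter_of_xor (.inr ⟨?_, ?_⟩))⟩
  · exact ⟨hav, hvp.trans_lt hp.2⟩
  · exact fun hu => hu.1.not_gt hua

end HomeoOnIcc

/-- for a group without linked fixed points, an interval of
successive fixed points is either preserved or moved off itself by any element. -/
theorem stmt18 (G : Subgroup (Equiv.Perm ℝ)) (hG : ∀ g ∈ G, HomeoOnIcc g)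
    (hnl : ∀ a b c d : ℝ, SuccFix G a b → SuccFix G c d → ¬ LinkedPairs a b c d)
    (f : Equiv.Perm ℝ) (hfG : f ∈ G) (a b : ℝ) (hab : IsCompFix f a b)
    (g : Equiv.Perm ℝ) (hgG : g ∈ G) :
    ⇑g '' Icc a b = Icc a b ∨ Disjoint (⇑g '' Ioo a b) (Ioo a b) := by
  have hg := hG g hgG
  have hab_succ : SuccFix G a b := ⟨f, hfG, hab⟩
  have himage_succ : SuccFix G (g a) (g b) :=
    ⟨g * f * g⁻¹, G.mul_mem (G.mul_mem hgG hfG) (G.inv_mem hgG), hg.isCompFix_conj hab⟩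
  obtain ⟨ha, hb, hlt, -⟩ := hab
  rw [hg.image_Icc ha hb hlt.le, hg.image_Ioo ha hb hlt.le]
  rcases eq_or_disjoint_or_nested_of_not_linkedPairs hlt (hg.strictMonoOn ha hb hlt)
      (hnl a b _ _ hab_succ himage_succ) with ⟨hc, hd⟩ | hdisj | hnested
  · exact .inl (by rw [hc, hd])
  · exact .inr hdisj
  · have hsign : (g a - a) * (g b - b) < 0 := by
      rcases hnested with ⟨hc, hd⟩ | ⟨hc, hd⟩
      exacts [mul_neg_of_pos_of_neg (by linarith) (by linarith),
        mul_neg_of_neg_of_pos (by linarith) (by linarith)]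
    obtain ⟨u, v, huv, hlinked⟩ := hg.exists_isCompFix_linkedPairs ha hb hlt hsign
    exact absurd hlinked (hnl a b u v hab_succ ⟨g, hgG, huv⟩)
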